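/- arXiv:2303.08679 — 3 statements merged into one kernel-verified Lean document; each statement's English description precedes it below -/
import Mathlib

section
/- Let Ω ⊆ ℝ³ be a bounded open set, v ∈ C_{c,σ}^∞(Ω), and let ρ be C² on Ω with ρ and its partial derivatives up to order 2 extending continuously to the closure of Ω. Then ∫_Ω (v·∇ρ)(Δρ) dx = −∑_{i,j=1}^3 ∫_Ω (∂_{x_j}v_i)(∂_{x_i}ρ)(∂_{x_j}ρ) dx, and consequently |∫_Ω (v·∇ρ)(Δρ) dx| ≤ (∑_{i,j=1}^3 ∫_Ω |∂_{x_j}v_i|² dx)^{1/2} · (∫_Ω |∇ρ|⁴ dx)^{1/2}. -/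
open MeasureTheory Filter

noncomputable section

abbrev E3 := EuclideanSpace ℝ (Fin 3)

/-- The partial derivative `∂f/∂xᵢ`. -/
noncomputable def pd (i : Fin 3) (f : E3 → ℝ) (x : E3) : ℝ :=
  fderiv ℝ f x (EuclideanSpace.single i 1)

/-- The Laplacian `Δf = ∑ ∂²f/∂xᵢ²`. -/
noncomputable def lap (f : E3 → ℝ) (x : E3) : ℝ :=
  ∑ i : Fin 3, pd i (pd i f) x

/-- `φ ∈ C_c^∞(Ω)`. -/
def TestFun (Ω : Set E3) (φ : E3 → ℝ) : Prop :=
  ContDiff ℝ (⊤ : ℕ∞) φ ∧ HasCompactSupport φ ∧ tsupport φ ⊆ Ω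

/-- `v ∈ C_{c,σ}^∞(Ω)`: smooth compactly supported divergence-free vector fields on `Ω`. -/
def TestVF (Ω : Set E3) (v : Fin 3 → E3 → ℝ) : Prop :=
  (∀ i, TestFun Ω (v i)) ∧ ∀ x ∈ Ω, ∑ i : Fin 3, pd i (v i) x = 0

/-- The weak Neumann boundary condition `∇ρ·ν = 0` on `∂Ω`:
`∫_Ω (Δρ) w = −∫_Ω ∇ρ·∇w` for every bounded locally Lipschitz `w`
with essentially bounded gradient. -/
def WeakNeumann (Ω : Set E3) (ρ : E3 → ℝ) : Prop :=
  ∀ w : E3 → ℝ, LocallyLipschitz w →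
    (∃ C, ∀ x ∈ Ω, |w x| ≤ C) →
    (∃ C, ∀ x ∈ Ω, ‖fderiv ℝ w x‖ ≤ C) →
    (∫ x in Ω, lap ρ x * w x) = -∫ x in Ω, ∑ i : Fin 3, pd i ρ x * pd i w x

/-- `ρ` is C² on `Ω` with `ρ` and its partial derivatives up to order 2
extending continuously to the closure of `Ω`. -/
def C2ext (Ω : Set E3) (ρ : E3 → ℝ) : Prop :=
  ContDiffOn ℝ 2 ρ Ω ∧ ContinuousOn ρ (closure Ω) ∧
  (∀ i, ContinuousOn (pd i ρ) (closure Ω)) ∧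
  (∀ i j, ContinuousOn (pd i (pd j ρ)) (closure Ω))

/-- `ρ` is C¹ on `Ω` with `ρ` and its first partial derivatives
extending continuously to the closure of `Ω`. -/
def C1ext (Ω : Set E3) (ρ : E3 → ℝ) : Prop :=
  ContDiffOn ℝ 1 ρ Ω ∧ ContinuousOn ρ (closure Ω) ∧
  (∀ i, ContinuousOn (pd i ρ) (closure Ω))

open Topology in
lemma aux_contDiff {Ω : Set E3} (hΩo : IsOpen Ω) (φ u : E3 → ℝ)
    (hφ : ContDiffOn ℝ 1 φ Ω) (hu : ContDiffOn ℝ 1 u Ω) (hφs : tsupport φ ⊆ Ω) :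
    ContDiff ℝ 1 (fun x => φ x * u x) := by
  rw [contDiff_iff_contDiffAt]
  intro x
  by_cases hx : x ∈ Ω
  · exact (hφ.contDiffAt (hΩo.mem_nhds hx)).mul (hu.contDiffAt (hΩo.mem_nhds hx))
  · have hxn : x ∉ tsupport φ := fun h => hx (hφs h)
    have hev : (fun y => φ y * u y) =ᶠ[𝓝 x] (fun _ => (0:ℝ)) := by
      filter_upwards [(isClosed_tsupport φ).isOpen_compl.mem_nhds hxn] with y hy
      simp [image_eq_zero_of_notMem_tsupport hy]
    exact (contDiffAt_const (c := (0:ℝ))).congr_of_eventuallyEq hev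

lemma aux_int_pd_zero (g : E3 → ℝ) (hg : ContDiff ℝ 1 g) (hgc : HasCompactSupport g)
    (j : Fin 3) : ∫ x, pd j g x = 0 := by
  have h := integral_mul_fderiv_eq_neg_fderiv_mul_of_integrable
    (f := fun _ : E3 => (1:ℝ)) (g := g) (v := EuclideanSpace.single j 1) (μ := volume)
    ?_ ?_ ?_ (fun x _ => differentiableAt_const (1:ℝ)) (fun x _ => hg.differentiable one_ne_zero x)
  · simpa [pd] using h
  · simp
  · have hc : Continuous fun x => fderiv ℝ g x (EuclideanSpace.single j 1) :=
      (hg.continuous_fderiv one_ne_zero).clm_apply continuous_const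
    simpa using hc.integrable_of_hasCompactSupport (hgc.fderiv_apply (𝕜 := ℝ) (EuclideanSpace.single j 1))
  · simpa using hg.continuous.integrable_of_hasCompactSupport hgc

lemma aux_pd_zero {f : E3 → ℝ} {x : E3} (hx : x ∉ tsupport f) (j : Fin 3) : pd j f x = 0 := by
  have : fderiv ℝ f x = 0 := by
    by_contra h
    exact hx (support_fderiv_subset ℝ (Function.mem_support.2 h))
  simp [pd, this]

open Topology in
lemma aux_ibp {Ω : Set E3} (hΩo : IsOpen Ω) (φ u : E3 → ℝ)
    (hφ1 : ContDiffOn ℝ 1 φ Ω) (hφc : HasCompactSupport φ) (hφs : tsupport φ ⊆ Ω)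
    (hu : ContDiffOn ℝ 1 u Ω) (j : Fin 3) :
    ∫ x in Ω, (pd j φ x * u x + φ x * pd j u x) = 0 := by
  set g : E3 → ℝ := fun x => φ x * u x with hgdef
  have hg : ContDiff ℝ 1 g := aux_contDiff hΩo φ u hφ1 hu hφs
  have hgc : HasCompactSupport g := hφc.mul_right
  have h0 : ∫ x, pd j g x = 0 := aux_int_pd_zero g hg hgc j
  have hext : ∫ x in Ω, pd j g x = ∫ x, pd j g x := by
    apply setIntegral_eq_integral_of_forall_compl_eq_zero
    intro x hx
    have hxn : x ∉ tsupport g := by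
      intro hmem
      exact hx (hφs (tsupport_mul_subset_left hmem))
    exact aux_pd_zero hxn j
  have hcong : ∀ x ∈ Ω, pd j φ x * u x + φ x * pd j u x = pd j g x := by
    intro x hx
    have hφd : DifferentiableAt ℝ φ x :=
      (hφ1.differentiableOn one_ne_zero).differentiableAt (hΩo.mem_nhds hx)
    have hud : DifferentiableAt ℝ u x :=
      (hu.differentiableOn one_ne_zero).differentiableAt (hΩo.mem_nhds hx)
    simp only [pd, hgdef]
    rw [fderiv_fun_mul hφd hud]
    simp only [ContinuousLinearMap.add_apply, ContinuousLinearMap.smul_apply, smul_eq_mul]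
    ring
  rw [setIntegral_congr_fun hΩo.measurableSet hcong, hext, h0]

open Topology in
lemma aux_integrableOn {Ω : Set E3} (hΩo : IsOpen Ω) {K : Set E3} (hK : IsCompact K)
    (hKΩ : K ⊆ Ω) (h : E3 → ℝ) (hh : ContinuousOn h Ω) (h0 : ∀ x ∉ K, h x = 0) :
    IntegrableOn h Ω := by
  have hc : Continuous h := by
    rw [continuous_iff_continuousAt]
    intro x
    by_cases hx : x ∈ Ω
    · exact hh.continuousAt (hΩo.mem_nhds hx)
    · have hxK : x ∉ K := fun hxk => hx (hKΩ hxk)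
      have hev : h =ᶠ[𝓝 x] (fun _ => (0:ℝ)) := by
        filter_upwards [hK.isClosed.isOpen_compl.mem_nhds hxK] with y hy
        exact h0 y hy
      exact hev.continuousAt
  exact (hc.integrable_of_hasCompactSupport
    (HasCompactSupport.intro hK h0)).integrableOn

theorem statement7_part1 (Ω : Set E3) (hΩo : IsOpen Ω)
    (v : Fin 3 → E3 → ℝ) (hv : TestVF Ω v)
    (ρ : E3 → ℝ) (hρ : C2ext Ω ρ) :
    (∫ x in Ω, (∑ i : Fin 3, v i x * pd i ρ x) * lap ρ x)
      = -∑ i : Fin 3, ∑ j : Fin 3, ∫ x in Ω, pd j (v i) x * pd i ρ x * pd j ρ x := by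
  obtain ⟨hvt, hdiv⟩ := hv
  obtain ⟨hρ2, hρc, hρ1c, hρ2c⟩ := hρ
  -- differentiability facts
  have hfd : ContDiffOn ℝ 1 (fderiv ℝ ρ) Ω := hρ2.fderiv_of_isOpen hΩo (by norm_num)
  have ha1 : ∀ i, ContDiffOn ℝ 1 (pd i ρ) Ω := fun i =>
    ((ContinuousLinearMap.apply ℝ ℝ
      (EuclideanSpace.single i 1)).contDiff.comp_contDiffOn hfd :)
  have hsymm : ∀ x ∈ Ω, ∀ i j, pd i (pd j ρ) x = pd j (pd i ρ) x := by
    intro x hx i j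
    have hx2 : ContDiffAt ℝ 2 ρ x := hρ2.contDiffAt (hΩo.mem_nhds hx)
    have hsy := hx2.isSymmSndFDerivAt (by simp)
    have hfd' : DifferentiableAt ℝ (fderiv ℝ ρ) x :=
      (hfd.differentiableOn one_ne_zero).differentiableAt (hΩo.mem_nhds hx)
    have key : ∀ k l : Fin 3, pd k (pd l ρ) x
        = fderiv ℝ (fderiv ℝ ρ) x (EuclideanSpace.single k 1) (EuclideanSpace.single l 1) := by
      intro k l
      have hcomp := ((ContinuousLinearMap.apply ℝ ℝ
        (EuclideanSpace.single l 1)).hasFDerivAt.comp x hfd'.hasFDerivAt).fderiv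
      have hpdl : pd l ρ
          = (ContinuousLinearMap.apply ℝ ℝ (EuclideanSpace.single l 1)) ∘ (fderiv ℝ ρ) := rfl
      simp only [pd]
      rw [hpdl, hcomp]
      rfl
    rw [key, key]
    exact hsy _ _
  have haC : ∀ i, ContinuousOn (pd i ρ) Ω := fun i => (hρ1c i).mono subset_closure
  have haaC : ∀ i j, ContinuousOn (pd i (pd j ρ)) Ω := fun i j => (hρ2c i j).mono subset_closure
  have hvK : ∀ i, IsCompact (tsupport (v i)) := fun i => (hvt i).2.1
  have hvKΩ : ∀ i, tsupport (v i) ⊆ Ω := fun i => (hvt i).2.2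
  have hv2 : ∀ i, ContDiff ℝ 2 (v i) := fun i => (hvt i).1.of_le (WithTop.coe_le_coe.2 le_top)
  have hvC : ∀ i, Continuous (v i) := fun i => (hv2 i).continuous
  have hpdvC : ∀ i j, Continuous (pd j (v i)) := fun i j =>
    ((hv2 i).continuous_fderiv (by norm_num)).clm_apply continuous_const
  have hv0 : ∀ i x, x ∉ tsupport (v i) → v i x = 0 := fun i x hx =>
    image_eq_zero_of_notMem_tsupport hx
  have hpdv0 : ∀ i j x, x ∉ tsupport (v i) → pd j (v i) x = 0 := fun i j x hx =>
    aux_pd_zero hx j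
  -- product rule
  have hpdmul : ∀ (f g : E3 → ℝ) (x : E3), DifferentiableAt ℝ f x → DifferentiableAt ℝ g x →
      ∀ j, pd j (fun y => f y * g y) x = pd j f x * g x + f x * pd j g x := by
    intro f g x hf hg j
    simp only [pd]
    rw [fderiv_fun_mul hf hg]
    simp only [ContinuousLinearMap.add_apply, ContinuousLinearMap.smul_apply, smul_eq_mul]
    ring
  have hvdiff : ∀ i x, DifferentiableAt ℝ (v i) x := fun i x =>
    ((hv2 i).differentiable two_ne_zero).differentiableAt
  have hadiff : ∀ i x, x ∈ Ω → DifferentiableAt ℝ (pd i ρ) x := fun i x hx =>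
    ((ha1 i).differentiableOn one_ne_zero).differentiableAt (hΩo.mem_nhds hx)
  -- integrability
  have hA : ∀ i j, IntegrableOn (fun x => v i x * pd i ρ x * pd j (pd j ρ) x) Ω := fun i j =>
    aux_integrableOn hΩo (hvK i) (hvKΩ i) _
      (((hvC i).continuousOn.mul (haC i)).mul (haaC j j))
      (fun x hx => by simp [hv0 i x hx])
  have hB : ∀ i j, IntegrableOn (fun x => pd j (v i) x * pd i ρ x * pd j ρ x) Ω := fun i j =>
    aux_integrableOn hΩo (hvK i) (hvKΩ i) _
      (((hpdvC i j).continuousOn.mul (haC i)).mul (haC j))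
      (fun x hx => by simp [hpdv0 i j x hx])
  have hC : ∀ i j, IntegrableOn (fun x => v i x * pd j (pd i ρ) x * pd j ρ x) Ω := fun i j =>
    aux_integrableOn hΩo (hvK i) (hvKΩ i) _
      (((hvC i).continuousOn.mul (haaC j i)).mul (haC j))
      (fun x hx => by simp [hv0 i x hx])
  have hC' : ∀ i j, IntegrableOn (fun x => v i x * pd i (pd j ρ) x * pd j ρ x) Ω := fun i j =>
    aux_integrableOn hΩo (hvK i) (hvKΩ i) _
      (((hvC i).continuousOn.mul (haaC i j)).mul (haC j))
      (fun x hx => by simp [hv0 i x hx])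
  have hD : ∀ i j, IntegrableOn (fun x => pd i (v i) x * (pd j ρ x * pd j ρ x)) Ω := fun i j =>
    aux_integrableOn hΩo (hvK i) (hvKΩ i) _
      ((hpdvC i i).continuousOn.mul ((haC j).mul (haC j)))
      (fun x hx => by simp [hpdv0 i i x hx])
  -- step 1
  have step1 : (∫ x in Ω, (∑ i : Fin 3, v i x * pd i ρ x) * lap ρ x)
      = ∑ i : Fin 3, ∑ j : Fin 3, ∫ x in Ω, v i x * pd i ρ x * pd j (pd j ρ) x := by
    have hptw : (fun x => (∑ i : Fin 3, v i x * pd i ρ x) * lap ρ x)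
        = fun x => ∑ i : Fin 3, ∑ j : Fin 3, v i x * pd i ρ x * pd j (pd j ρ) x := by
      funext x
      rw [lap, Finset.sum_mul_sum]
    rw [hptw, integral_finset_sum _ (fun i _ =>
      integrable_finset_sum _ (fun j _ => hA i j))]
    exact Finset.sum_congr rfl fun i _ => integral_finset_sum _ (fun j _ => hA i j)
  -- step 2 : integration by parts
  have step2 : ∀ i j, (∫ x in Ω, v i x * pd i ρ x * pd j (pd j ρ) x)
      = -(∫ x in Ω, pd j (v i) x * pd i ρ x * pd j ρ x)
        - ∫ x in Ω, v i x * pd j (pd i ρ) x * pd j ρ x := by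
    intro i j
    have hφ1 : ContDiffOn ℝ 1 (fun x => v i x * pd i ρ x) Ω :=
      (((hv2 i).of_le one_le_two).contDiffOn).mul (ha1 i)
    have hφc : HasCompactSupport (fun x => v i x * pd i ρ x) := (hvt i).2.1.mul_right
    have hφs : tsupport (fun x => v i x * pd i ρ x) ⊆ Ω :=
      tsupport_mul_subset_left.trans (hvKΩ i)
    have h := aux_ibp hΩo _ _ hφ1 hφc hφs (ha1 j) j
    have hcong : ∀ x ∈ Ω,
        pd j (fun y => v i y * pd i ρ y) x * pd j ρ x
          + (v i x * pd i ρ x) * pd j (pd j ρ) x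
        = (pd j (v i) x * pd i ρ x * pd j ρ x + v i x * pd j (pd i ρ) x * pd j ρ x)
          + v i x * pd i ρ x * pd j (pd j ρ) x := by
      intro x hx
      rw [hpdmul (v i) (pd i ρ) x (hvdiff i x) (hadiff i x hx) j]
      ring
    rw [setIntegral_congr_fun hΩo.measurableSet hcong] at h
    have hBC : IntegrableOn (fun x => pd j (v i) x * pd i ρ x * pd j ρ x
        + v i x * pd j (pd i ρ) x * pd j ρ x) Ω := (hB i j).add (hC i j)
    rw [integral_add hBC (hA i j), integral_add (hB i j) (hC i j)] at h
    linarith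
  -- step 3 : divergence-free kills the symmetric part
  have step3 : ∑ i : Fin 3, ∑ j : Fin 3,
      (∫ x in Ω, v i x * pd j (pd i ρ) x * pd j ρ x) = 0 := by
    rw [Finset.sum_comm]
    apply Finset.sum_eq_zero
    intro j _
    have hsy : ∀ i : Fin 3, (∫ x in Ω, v i x * pd j (pd i ρ) x * pd j ρ x)
        = ∫ x in Ω, v i x * pd i (pd j ρ) x * pd j ρ x := fun i =>
      setIntegral_congr_fun hΩo.measurableSet (fun x hx => by rw [← hsymm x hx i j])
    have key : ∀ i : Fin 3, (∫ x in Ω, pd i (v i) x * (pd j ρ x * pd j ρ x))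
        + 2 * ∫ x in Ω, v i x * pd i (pd j ρ) x * pd j ρ x = 0 := by
      intro i
      have h := aux_ibp hΩo (v i) (fun x => pd j ρ x * pd j ρ x)
        (((hv2 i).of_le one_le_two).contDiffOn) (hvt i).2.1 (hvt i).2.2
        ((ha1 j).mul (ha1 j)) i
      have hcong : ∀ x ∈ Ω,
          pd i (v i) x * (pd j ρ x * pd j ρ x)
            + v i x * pd i (fun y => pd j ρ y * pd j ρ y) x
          = pd i (v i) x * (pd j ρ x * pd j ρ x)
            + 2 * (v i x * pd i (pd j ρ) x * pd j ρ x) := by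
        intro x hx
        rw [hpdmul (pd j ρ) (pd j ρ) x (hadiff j x hx) (hadiff j x hx) i]
        ring
      rw [setIntegral_congr_fun hΩo.measurableSet hcong] at h
      have hE : IntegrableOn (fun x => 2 * (v i x * pd i (pd j ρ) x * pd j ρ x)) Ω :=
        (hC' i j).const_mul 2
      rw [integral_add (hD i j) hE, MeasureTheory.integral_const_mul] at h
      exact h
    have hdivint : ∑ i : Fin 3, (∫ x in Ω, pd i (v i) x * (pd j ρ x * pd j ρ x)) = 0 := by
      rw [← integral_finset_sum _ (fun i _ => hD i j)]
      have hz : ∀ x ∈ Ω, (∑ i : Fin 3, pd i (v i) x * (pd j ρ x * pd j ρ x)) = 0 := by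
        intro x hx
        rw [← Finset.sum_mul, hdiv x hx, zero_mul]
      rw [setIntegral_congr_fun hΩo.measurableSet hz, integral_zero]
    have h0 : ∑ i : Fin 3, ((∫ x in Ω, pd i (v i) x * (pd j ρ x * pd j ρ x))
        + 2 * ∫ x in Ω, v i x * pd i (pd j ρ) x * pd j ρ x) = 0 :=
      Finset.sum_eq_zero fun i _ => key i
    rw [Finset.sum_add_distrib, hdivint, ← Finset.mul_sum] at h0
    have h1 : ∑ i : Fin 3, (∫ x in Ω, v i x * pd i (pd j ρ) x * pd j ρ x) = 0 := by
      linarith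
    calc ∑ i : Fin 3, (∫ x in Ω, v i x * pd j (pd i ρ) x * pd j ρ x)
        = ∑ i : Fin 3, (∫ x in Ω, v i x * pd i (pd j ρ) x * pd j ρ x) :=
          Finset.sum_congr rfl fun i _ => hsy i
      _ = 0 := h1
  rw [step1]
  rw [Finset.sum_congr rfl (fun i _ => Finset.sum_congr rfl (fun j _ => step2 i j))]
  simp only [Finset.sum_sub_distrib, Finset.sum_neg_distrib]
  rw [step3]
  ring

theorem statement7_part2 (Ω : Set E3) (hΩo : IsOpen Ω) (hΩb : Bornology.IsBounded Ω)
    (v : Fin 3 → E3 → ℝ) (hv : TestVF Ω v) (ρ : E3 → ℝ) (hρ : C2ext Ω ρ) :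
    |∑ i : Fin 3, ∑ j : Fin 3, ∫ x in Ω, pd j (v i) x * pd i ρ x * pd j ρ x|
      ≤ Real.sqrt (∫ x in Ω, ∑ i : Fin 3, ∑ j : Fin 3, (pd j (v i) x)^2)
        * Real.sqrt (∫ x in Ω, (∑ i : Fin 3, (pd i ρ x)^2)^2) := by
  obtain ⟨hvt, hdiv⟩ := hv
  obtain ⟨hρ2, hρc, hρ1c, hρ2c⟩ := hρ
  have haC : ∀ i, ContinuousOn (pd i ρ) Ω := fun i => (hρ1c i).mono subset_closure
  have hvK : ∀ i, IsCompact (tsupport (v i)) := fun i => (hvt i).2.1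
  have hvKΩ : ∀ i, tsupport (v i) ⊆ Ω := fun i => (hvt i).2.2
  have hv2 : ∀ i, ContDiff ℝ 2 (v i) := fun i => (hvt i).1.of_le (WithTop.coe_le_coe.2 le_top)
  have hvC : ∀ i, Continuous (v i) := fun i => (hv2 i).continuous
  have hpdvC : ∀ i j, Continuous (pd j (v i)) := fun i j =>
    ((hv2 i).continuous_fderiv (by norm_num)).clm_apply continuous_const
  have hpdv0 : ∀ i j, ∀ x ∉ tsupport (v i), pd j (v i) x = 0 := fun i j x hx =>
    aux_pd_zero hx j
  have hB : ∀ i j, IntegrableOn (fun x => pd j (v i) x * pd i ρ x * pd j ρ x) Ω := fun i j =>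
    aux_integrableOn hΩo (hvK i) (hvKΩ i) _
      (((hpdvC i j).continuousOn.mul (haC i)).mul (haC j))
      (fun x hx => by simp [hpdv0 i j x hx])
  set P : E3 → ℝ := fun x => Real.sqrt (∑ i : Fin 3, ∑ j : Fin 3, (pd j (v i) x)^2) with hPdef
  set Q : E3 → ℝ := fun x => ∑ i : Fin 3, (pd i ρ x)^2 with hQdef
  set H : E3 → ℝ := fun x => ∑ i : Fin 3, ∑ j : Fin 3, pd j (v i) x * pd i ρ x * pd j ρ x
    with hHdef
  have hHint : IntegrableOn H Ω :=
    integrable_finset_sum _ (fun i _ => integrable_finset_sum _ fun j _ => hB i j)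
  have hsum : ∑ i : Fin 3, ∑ j : Fin 3, (∫ x in Ω, pd j (v i) x * pd i ρ x * pd j ρ x)
      = ∫ x in Ω, H x := by
    rw [hHdef, integral_finset_sum _ (fun i _ => integrable_finset_sum _ fun j _ => hB i j)]
    exact Finset.sum_congr rfl fun i _ => (integral_finset_sum _ fun j _ => hB i j).symm
  -- pointwise Cauchy-Schwarz
  have hptw : ∀ x, |H x| ≤ P x * Q x := by
    intro x
    have h1 : (H x)^2 ≤ (∑ i : Fin 3, ∑ j : Fin 3, (pd j (v i) x)^2)
        * (∑ i : Fin 3, ∑ j : Fin 3, (pd i ρ x * pd j ρ x)^2) := by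
      have := Finset.sum_mul_sq_le_sq_mul_sq Finset.univ
        (fun p : Fin 3 × Fin 3 => pd p.2 (v p.1) x)
        (fun p : Fin 3 × Fin 3 => pd p.1 ρ x * pd p.2 ρ x)
      simpa [hHdef, Fintype.sum_prod_type, mul_assoc] using this
    have h2 : (∑ i : Fin 3, ∑ j : Fin 3, (pd i ρ x * pd j ρ x)^2) = (Q x)^2 := by
      have hq : (Q x)^2 = ∑ i : Fin 3, ∑ j : Fin 3, (pd i ρ x)^2 * (pd j ρ x)^2 := by
        rw [hQdef, pow_two]
        exact Finset.sum_mul_sum _ _ _ _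
      rw [hq]
      exact Finset.sum_congr rfl fun i _ => Finset.sum_congr rfl fun j _ => mul_pow _ _ _
    rw [h2] at h1
    calc |H x| = Real.sqrt ((H x)^2) := (Real.sqrt_sq_eq_abs _).symm
      _ ≤ Real.sqrt ((∑ i : Fin 3, ∑ j : Fin 3, (pd j (v i) x)^2) * (Q x)^2) :=
          Real.sqrt_le_sqrt h1
      _ = P x * Q x := by
          rw [Real.sqrt_mul (by positivity), Real.sqrt_sq (by positivity)]
  -- integrability and Memℒp facts
  have hPc : Continuous P := by
    apply Real.continuous_sqrt.comp
    exact continuous_finset_sum _ fun i _ => continuous_finset_sum _ fun j _ => (hpdvC i j).pow 2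
  have hPsupp : HasCompactSupport P := by
    apply HasCompactSupport.intro (isCompact_iUnion hvK) -- K := ⋃ i, tsupport (v i)
    intro x hx
    have : ∀ i j : Fin 3, pd j (v i) x = 0 := fun i j =>
      hpdv0 i j x (fun h => hx (Set.mem_iUnion.2 ⟨i, h⟩))
    simp [hPdef, this]
  have hPint : IntegrableOn P Ω := (hPc.integrable_of_hasCompactSupport hPsupp).integrableOn
  have hQC : ContinuousOn Q (closure Ω) :=
    continuousOn_finset_sum _ fun i _ => ((hρ1c i).pow 2)
  have hcc : IsCompact (closure Ω) := hΩb.isCompact_closure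
  obtain ⟨C, hC⟩ := hcc.exists_bound_of_continuousOn hQC
  have hQmeas : AEStronglyMeasurable Q (volume.restrict Ω) :=
    (hQC.mono subset_closure).aestronglyMeasurable hΩo.measurableSet
  have hQbd : ∀ᵐ x ∂(volume.restrict Ω), ‖Q x‖ ≤ C :=
    (ae_restrict_iff' hΩo.measurableSet).2 (ae_of_all _ fun x hx => hC x (subset_closure hx))
  haveI hfin : IsFiniteMeasure (volume.restrict Ω) :=
    ⟨by rw [Measure.restrict_apply_univ]; exact hΩb.measure_lt_top⟩
  have hPQ : IntegrableOn (fun x => Q x * P x) Ω := hPint.bdd_mul hQmeas hQbd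
  have hconj : Real.HolderConjugate 2 2 := Real.HolderConjugate.two_two
  have hofr : ENNReal.ofReal (2:ℝ) = 2 := by norm_num
  have hP2 : MemLp P (ENNReal.ofReal (2:ℝ)) (volume.restrict Ω) := by
    rw [hofr]
    exact (hPc.memLp_of_hasCompactSupport (p := 2) hPsupp).restrict Ω
  have hQ2 : MemLp Q (ENNReal.ofReal (2:ℝ)) (volume.restrict Ω) :=
    MemLp.of_bound hQmeas C hQbd
  have hHolder := MeasureTheory.integral_mul_le_Lp_mul_Lq_of_nonneg hconj
    (μ := volume.restrict Ω) (ae_of_all _ fun x => Real.sqrt_nonneg _)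
    (ae_of_all _ fun x => by positivity) hP2 hQ2
  -- rewrite powers
  have hrw2 : ∀ y : ℝ, y ^ (2:ℝ) = y ^ 2 := fun y => by
    rw [show (2:ℝ) = ((2:ℕ):ℝ) by norm_num, Real.rpow_natCast]
  have hPsq : (∫ x in Ω, P x ^ (2:ℝ))
      = ∫ x in Ω, ∑ i : Fin 3, ∑ j : Fin 3, (pd j (v i) x)^2 := by
    apply integral_congr_ae (ae_of_all _ fun x => ?_)
    rw [hrw2, hPdef]
    exact Real.sq_sqrt (by positivity)
  have hQsq : (∫ x in Ω, Q x ^ (2:ℝ)) = ∫ x in Ω, (∑ i : Fin 3, (pd i ρ x)^2)^2 := by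
    apply integral_congr_ae (ae_of_all _ fun x => ?_)
    rw [hrw2]
  calc |∑ i : Fin 3, ∑ j : Fin 3, ∫ x in Ω, pd j (v i) x * pd i ρ x * pd j ρ x|
      = |∫ x in Ω, H x| := by rw [hsum]
    _ ≤ ∫ x in Ω, |H x| := by
        simpa [Real.norm_eq_abs] using norm_integral_le_integral_norm (μ := volume.restrict Ω) H
    _ ≤ ∫ x in Ω, P x * Q x := by
        apply integral_mono hHint.abs ?_ hptw
        exact hPQ.congr (ae_of_all _ fun x => mul_comm _ _)
    _ = ∫ x in Ω, Q x * P x := by simp [mul_comm]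
    _ ≤ (∫ x in Ω, Q x ^ (2:ℝ)) ^ ((1:ℝ)/2) * (∫ x in Ω, P x ^ (2:ℝ)) ^ ((1:ℝ)/2) := by
        simpa [mul_comm] using hHolder
    _ = Real.sqrt (∫ x in Ω, ∑ i : Fin 3, ∑ j : Fin 3, (pd j (v i) x)^2)
        * Real.sqrt (∫ x in Ω, (∑ i : Fin 3, (pd i ρ x)^2)^2) := by
        rw [hPsq, hQsq, ← Real.sqrt_eq_rpow, ← Real.sqrt_eq_rpow]
        ring


/-- The identity `∫_Ω (v·∇ρ)(Δρ) = −∑_{i,j} ∫_Ω (∂_j v_i)(∂_i ρ)(∂_j ρ)` for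
divergence-free test fields `v`, and the resulting Cauchy–Schwarz estimate. -/
theorem statement7 (Ω : Set E3) (hΩo : IsOpen Ω) (hΩb : Bornology.IsBounded Ω)
    (v : Fin 3 → E3 → ℝ) (hv : TestVF Ω v)
    (ρ : E3 → ℝ) (hρ : C2ext Ω ρ) :
    (∫ x in Ω, (∑ i : Fin 3, v i x * pd i ρ x) * lap ρ x)
      = -∑ i : Fin 3, ∑ j : Fin 3, ∫ x in Ω, pd j (v i) x * pd i ρ x * pd j ρ x ∧
    |∫ x in Ω, (∑ i : Fin 3, v i x * pd i ρ x) * lap ρ x|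
      ≤ Real.sqrt (∫ x in Ω, ∑ i : Fin 3, ∑ j : Fin 3, (pd j (v i) x)^2)
        * Real.sqrt (∫ x in Ω, (∑ i : Fin 3, (pd i ρ x)^2)^2) := by
  have h1 := statement7_part1 Ω hΩo v hv ρ hρ
  have h2 := statement7_part2 Ω hΩo hΩb v hv ρ hρ
  refine ⟨h1, ?_⟩
  rw [h1, abs_neg]
  exact h2
end
end

section
/- Let Ω ⊆ ℝ³ be an open set, let μ : (0,∞) → ℝ be C¹, let ρ be C³ on Ω with ρ(x) > 0 for all x ∈ Ω, and let w ∈ C_{c,σ}^∞(Ω). Then ∫_Ω ∑_{i=1}^3 [ ∑_{j=1}^3 ∂_{x_j}( μ(ρ) ∂_{x_j}∂_{x_i}(log ρ) ) ] w_i dx = ∑_{i,j=1}^3 ∫_Ω (μ'(ρ)/ρ) (∂_{x_i}ρ)(∂_{x_j}ρ)(∂_{x_j}w_i) dx; that is, ∫_Ω { ∇·( μ(ρ) ∇∇(log ρ) ) } · w dx = ∑_{i,j=1}^3 ∫_Ω (μ'(ρ)/ρ)(∂_{x_i}ρ)(∂_{x_j}ρ)(∂_{x_j}w_i) dx. -/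
open MeasureTheory Filter

noncomputable section

lemma pd_zero_off_tsupport {φ : E3 → ℝ} {x : E3} (hx : x ∉ tsupport φ) (j : Fin 3) :
    pd j φ x = 0 := by
  have hev : φ =ᶠ[nhds x] (fun _ => (0:ℝ)) := by
    filter_upwards [(isClosed_tsupport φ).isOpen_compl.mem_nhds hx] with y hy
    exact image_eq_zero_of_notMem_tsupport hy
  unfold pd
  rw [hev.fderiv_eq, fderiv_fun_const]
  simp

lemma pd_smooth {φ : E3 → ℝ} (hφ : ContDiff ℝ (⊤ : ℕ∞) φ) (j : Fin 3) : ContDiff ℝ (⊤ : ℕ∞) (pd j φ) := by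
  exact (hφ.fderiv_right (m := (⊤ : ℕ∞)) (by simp)).clm_apply contDiff_const

lemma tsupport_pd_subset (φ : E3 → ℝ) (j : Fin 3) : tsupport (pd j φ) ⊆ tsupport φ := by
  apply closure_minimal _ (isClosed_tsupport φ)
  intro x hx
  by_contra hxt
  exact hx (pd_zero_off_tsupport hxt j)

lemma TestFun.pd {Ω : Set E3} {φ : E3 → ℝ} (hφ : TestFun Ω φ) (j : Fin 3) :
    TestFun Ω (pd j φ) :=
  ⟨pd_smooth hφ.1 j, HasCompactSupport.of_support_subset_isCompact hφ.2.1 (subset_closure.trans (tsupport_pd_subset φ j)),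
    (tsupport_pd_subset φ j).trans hφ.2.2⟩

lemma pd_comm {f : E3 → ℝ} (hf : ContDiff ℝ (⊤ : ℕ∞) f) (a b : Fin 3) (x : E3) :
    pd a (pd b f) x = pd b (pd a f) x := by
  have hd : Differentiable ℝ f := hf.differentiable (by simp)
  have hd2 : Differentiable ℝ (fderiv ℝ f) :=
    (hf.fderiv_right (m := (⊤ : ℕ∞)) (by simp)).differentiable (by simp)
  have hsymm := second_derivative_symmetric (f := f) (f' := fderiv ℝ f)
    (f'' := fderiv ℝ (fderiv ℝ f) x) (fun y => (hd y).hasFDerivAt) (hd2 x).hasFDerivAt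
  have key : ∀ v : E3, HasFDerivAt (fun y => fderiv ℝ f y v)
      ((ContinuousLinearMap.apply ℝ ℝ v).comp (fderiv ℝ (fderiv ℝ f) x)) x := fun v =>
    (ContinuousLinearMap.apply ℝ ℝ v).hasFDerivAt.comp x (hd2 x).hasFDerivAt
  show fderiv ℝ (fun y => fderiv ℝ f y (EuclideanSpace.single b 1)) x (EuclideanSpace.single a 1)
    = fderiv ℝ (fun y => fderiv ℝ f y (EuclideanSpace.single a 1)) x (EuclideanSpace.single b 1)
  rw [(key _).fderiv, (key _).fderiv]
  exact hsymm _ _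

lemma pd_sum {g : Fin 3 → E3 → ℝ} {x : E3} (hg : ∀ i, DifferentiableAt ℝ (g i) x) (j : Fin 3) :
    pd j (fun y => ∑ i, g i y) x = ∑ i, pd j (g i) x := by
  unfold pd
  rw [fderiv_fun_sum (fun i _ => hg i)]
  simp

lemma pi_div_zero (g : (Fin 3 → ℝ) → ℝ) (j : Fin 3)
    (hd : Differentiable ℝ g)
    (hc : Continuous fun y => fderiv ℝ g y (Pi.single j 1))
    (hs : HasCompactSupport g) :
    ∫ y, fderiv ℝ g y (Pi.single j 1) = 0 := by
  obtain ⟨R, hR⟩ := hs.isBounded.subset_closedBall 0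
  set M : ℝ := |R| + 1 with hM
  have hRM : R < M := lt_of_le_of_lt (le_abs_self R) (by simp [hM])
  set a : Fin 3 → ℝ := fun _ => -M with ha
  set b : Fin 3 → ℝ := fun _ => M with hb
  have hMpos : (0:ℝ) < M := by positivity
  have hle : a ≤ b := fun i => by
    simp only [ha, hb]; linarith
  -- g vanishes whenever some coordinate has absolute value ≥ M
  have hzero : ∀ y : Fin 3 → ℝ, (∃ i, M ≤ |y i|) → y ∉ tsupport g := by
    rintro y ⟨i, hi⟩ hmem
    have h1 : ‖y‖ ≤ R := by simpa using (hR hmem)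
    have h2 : |y i| ≤ ‖y‖ := norm_le_pi_norm y i
    linarith
  have hgz : ∀ y : Fin 3 → ℝ, (∃ i, M ≤ |y i|) → g y = 0 := fun y hy =>
    image_eq_zero_of_notMem_tsupport (hzero y hy)
  set f : Fin 3 → (Fin 3 → ℝ) → ℝ := fun i => if i = j then g else fun _ => 0 with hf
  set f' : Fin 3 → (Fin 3 → ℝ) → (Fin 3 → ℝ) →L[ℝ] ℝ :=
    fun i => if i = j then fderiv ℝ g else fun _ => 0 with hf'
  have hdiv : ∀ y, (∑ i, f' i y (Pi.single i 1)) = fderiv ℝ g y (Pi.single j 1) := by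
    intro y
    rw [Finset.sum_eq_single j]
    · simp [hf']
    · intro i _ hij; simp [hf', hij]
    · simp
  have key := MeasureTheory.integral_divergence_of_hasFDerivAt_off_countable'
    (E := ℝ) (n := 2) a b hle f f' ∅ Set.countable_empty
    (fun i => by
      by_cases hij : i = j
      · simpa [hf, hij] using (hd.continuous).continuousOn
      · simp [hf, hij]; exact continuousOn_const)
    (fun x _ i => by
      by_cases hij : i = j
      · simpa [hf, hf', hij] using (hd x).hasFDerivAt
      · simp [hf, hf', hij]; exact hasFDerivAt_const 0 x)
    (by
      apply ContinuousOn.integrableOn_compact isCompact_Icc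
      exact (hc.congr (fun y => (hdiv y).symm)).continuousOn)
  rw [funext hdiv] at key
  -- faces vanish
  have hfaces : ∀ (i : Fin 3) (c : ℝ), |c| = M →
      ∀ x : Fin 2 → ℝ, f i (Fin.insertNth i c x) = 0 := by
    intro i c hcM x
    by_cases hij : i = j
    · subst hij
      simp only [hf, if_pos rfl]
      apply hgz
      exact ⟨i, by rw [Fin.insertNth_apply_same, hcM]⟩
    · simp [hf, hij]
  have hRHS : (∑ i : Fin 3,
      ((∫ x in Set.Icc (a ∘ i.succAbove) (b ∘ i.succAbove), f i (i.insertNth (b i) x)) -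
        ∫ x in Set.Icc (a ∘ i.succAbove) (b ∘ i.succAbove), f i (i.insertNth (a i) x))) = 0 := by
    apply Finset.sum_eq_zero
    intro i _
    have h1 : ∀ x : Fin 2 → ℝ, f i (i.insertNth (b i) x) = 0 := by
      intro x; exact hfaces i (b i) (by simp only [hb]; exact abs_of_pos hMpos) x
    have h2 : ∀ x : Fin 2 → ℝ, f i (i.insertNth (a i) x) = 0 := by
      intro x; exact hfaces i (a i) (by simp only [ha]; rw [abs_neg]; exact abs_of_pos hMpos) x
    simp [h1, h2]
  rw [hRHS] at key
  -- extend integral from Icc to whole space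
  rw [← key]
  symm
  apply MeasureTheory.setIntegral_eq_integral_of_forall_compl_eq_zero
  intro y hy
  have : ∃ i, M ≤ |y i| := by
    by_contra hcon
    push_neg at hcon
    exact hy ⟨fun i => by have := hcon i; rw [abs_lt] at this; simpa [ha] using this.1.le,
              fun i => by have := hcon i; rw [abs_lt] at this; simpa [hb] using this.2.le⟩
  have hev : g =ᶠ[nhds y] (fun _ => (0:ℝ)) := by
    filter_upwards [(isClosed_tsupport g).isOpen_compl.mem_nhds (hzero y this)] with z hz
    exact image_eq_zero_of_notMem_tsupport hz
  rw [hev.fderiv_eq, fderiv_fun_const]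
  simp

lemma integral_pd (h : E3 → ℝ) (hd : Differentiable ℝ h)
    (hc : Continuous (fderiv ℝ h)) (hs : HasCompactSupport h) (j : Fin 3) :
    ∫ x, pd j h x = 0 := by
  set eqv := EuclideanSpace.equiv (Fin 3) ℝ with heqv
  set g : (Fin 3 → ℝ) → ℝ := fun y => h (eqv.symm y) with hg
  have hsingle : (eqv.symm : (Fin 3 → ℝ) →L[ℝ] E3) (Pi.single j 1) = EuclideanSpace.single j 1 := by
    rfl
  have hgder : ∀ y, HasFDerivAt g
      ((fderiv ℝ h (eqv.symm y)).comp (eqv.symm : (Fin 3 → ℝ) →L[ℝ] E3)) y := fun y =>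
    ((hd _).hasFDerivAt).comp y (eqv.symm.hasFDerivAt)
  have hgd : Differentiable ℝ g := fun y => (hgder y).differentiableAt
  have hkey : ∀ y, fderiv ℝ g y (Pi.single j 1) = pd j h (eqv.symm y) := by
    intro y
    rw [(hgder y).fderiv]
    show fderiv ℝ h (eqv.symm y) ((eqv.symm : (Fin 3 → ℝ) →L[ℝ] E3) (Pi.single j 1)) = _
    rw [hsingle]; rfl
  have hgc : Continuous fun y => fderiv ℝ g y (Pi.single j 1) := by
    have : Continuous fun y => pd j h (eqv.symm y) := by
      have h1 : Continuous fun x : E3 => pd j h x :=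
        (ContinuousLinearMap.apply ℝ ℝ (EuclideanSpace.single j 1)).continuous.comp hc
      exact h1.comp eqv.symm.continuous
    exact this.congr fun y => (hkey y).symm
  have hgs : HasCompactSupport g := hs.comp_homeomorph eqv.symm.toHomeomorph
  have h0 := pi_div_zero g j hgd hgc hgs
  rw [funext hkey] at h0
  have hmp : MeasurePreserving (MeasurableEquiv.toLp 2 (Fin 3 → ℝ))
      (volume : Measure (Fin 3 → ℝ)) (volume : Measure E3) :=
    (EuclideanSpace.volume_preserving_symm_measurableEquiv_toLp (Fin 3)).symm
  have := hmp.integral_comp (MeasurableEquiv.toLp 2 (Fin 3 → ℝ)).measurableEmbedding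
    (fun x => pd j h x)
  rw [← this]
  rw [← h0]
  rfl

/-- glue continuity: continuous on open Ω times a test function supported in Ω is
globally continuous with compact support -/
lemma glue_cont {Ω : Set E3} (hΩo : IsOpen Ω) {g φ : E3 → ℝ}
    (hg : ContinuousOn g Ω) (hφc : Continuous φ) (hsub : tsupport φ ⊆ Ω) :
    Continuous (fun x => g x * φ x) := by
  rw [continuous_iff_continuousAt]
  intro x
  by_cases hx : x ∈ Ω
  · exact ((hg.continuousAt (hΩo.mem_nhds hx)).mul hφc.continuousAt)
  · have hxt : x ∉ tsupport φ := fun h => hx (hsub h)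
    have hev : (fun y => g y * φ y) =ᶠ[nhds x] (fun _ => (0:ℝ)) := by
      filter_upwards [(isClosed_tsupport φ).isOpen_compl.mem_nhds hxt] with y hy
      rw [image_eq_zero_of_notMem_tsupport hy, mul_zero]
    exact ContinuousAt.congr continuousAt_const hev.symm

lemma glue_integrable {Ω : Set E3} (hΩo : IsOpen Ω) {g φ : E3 → ℝ}
    (hg : ContinuousOn g Ω) (hφc : Continuous φ) (hφs : HasCompactSupport φ)
    (hsub : tsupport φ ⊆ Ω) :
    IntegrableOn (fun x => g x * φ x) Ω volume := by
  have hcs : HasCompactSupport (fun x => g x * φ x) := by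
    apply HasCompactSupport.of_support_subset_isCompact hφs
    intro x hx
    simp only [Function.mem_support] at hx
    have : φ x ≠ 0 := fun h => hx (by rw [h, mul_zero])
    exact subset_closure this
  exact ((glue_cont hΩo hg hφc hsub).integrable_of_hasCompactSupport hcs).integrableOn

/-- Integration by parts -/
lemma ibp {Ω : Set E3} (hΩo : IsOpen Ω) {f φ : E3 → ℝ} (j : Fin 3)
    (hfd : ∀ x ∈ Ω, DifferentiableAt ℝ f x)
    (hf' : ContinuousOn (fderiv ℝ f) Ω)
    (hφ : TestFun Ω φ) :
    ∫ x in Ω, pd j f x * φ x = - ∫ x in Ω, f x * pd j φ x := by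
  have htp := hφ.pd j
  obtain ⟨hφsm, hφcs, hφsub⟩ := hφ
  have hφd : Differentiable ℝ φ := hφsm.differentiable (by simp)
  have hfc : ContinuousOn f Ω := fun y hy => (hfd y hy).continuousAt.continuousWithinAt
  set h : E3 → ℝ := fun x => f x * φ x with hh
  -- h is differentiable everywhere with derivative F
  set F : E3 → E3 →L[ℝ] ℝ := fun x => φ x • fderiv ℝ f x + f x • fderiv ℝ φ x with hF
  have hcover : ∀ x : E3, x ∈ Ω ∨ x ∉ tsupport φ := by
    intro x
    by_cases hx : x ∈ Ω
    · exact Or.inl hx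
    · exact Or.inr fun h => hx (hφsub h)
  have hev0 : ∀ x ∉ tsupport φ, h =ᶠ[nhds x] (fun _ => (0:ℝ)) := by
    intro x hx
    filter_upwards [(isClosed_tsupport φ).isOpen_compl.mem_nhds hx] with y hy
    rw [hh]; simp only
    rw [image_eq_zero_of_notMem_tsupport hy, mul_zero]
  have hφev0 : ∀ x ∉ tsupport φ, φ =ᶠ[nhds x] (fun _ => (0:ℝ)) := by
    intro x hx
    filter_upwards [(isClosed_tsupport φ).isOpen_compl.mem_nhds hx] with y hy
    exact image_eq_zero_of_notMem_tsupport hy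
  have hhd : ∀ x, HasFDerivAt h (F x) x := by
    intro x
    rcases hcover x with hx | hx
    · simpa [hF, add_comm] using (show HasFDerivAt h _ x from (hfd x hx).hasFDerivAt.mul hφd.differentiableAt.hasFDerivAt)
    · have : fderiv ℝ φ x = 0 := by
        rw [(hφev0 x hx).fderiv_eq, fderiv_fun_const]; rfl
      have hφx : φ x = 0 := image_eq_zero_of_notMem_tsupport hx
      have hF0 : F x = 0 := by rw [hF]; simp [this, hφx]
      rw [hF0]
      apply (hasFDerivAt_const (0:ℝ) x).congr_of_eventuallyEq
      exact (hev0 x hx)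
  have hhdiff : Differentiable ℝ h := fun x => (hhd x).differentiableAt
  have hfderivh : fderiv ℝ h = F := funext fun x => (hhd x).fderiv
  have hFc : Continuous F := by
    rw [continuous_iff_continuousAt]
    intro x
    rcases hcover x with hx | hx
    · have : ContinuousOn F Ω := by
        apply ContinuousOn.add
        · exact (hφsm.continuous.continuousOn).smul hf'
        · exact hfc.smul ((hφsm.fderiv_right (m := (⊤ : ℕ∞)) (by simp)).continuous.continuousOn)
      exact this.continuousAt (hΩo.mem_nhds hx)
    · have hev : F =ᶠ[nhds x] (fun _ => (0:E3 →L[ℝ] ℝ)) := by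
        filter_upwards [(isClosed_tsupport φ).isOpen_compl.mem_nhds hx] with y hy
        have h1 : φ y = 0 := image_eq_zero_of_notMem_tsupport hy
        have h2 : fderiv ℝ φ y = 0 := by
          rw [(hφev0 y hy).fderiv_eq, fderiv_fun_const]; rfl
        rw [hF]; simp [h1, h2]
      exact ContinuousAt.congr continuousAt_const hev.symm
  have hhs : HasCompactSupport h := by
    apply HasCompactSupport.of_support_subset_isCompact hφcs
    intro x hx
    simp only [hh, Function.mem_support] at hx
    have : φ x ≠ 0 := fun h0 => hx (by rw [h0, mul_zero])
    exact subset_closure this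
  have h0 : ∫ x, pd j h x = 0 := by
    apply integral_pd h hhdiff _ hhs j
    rw [hfderivh]; exact hFc
  -- pd j h = pd j f * φ + f * pd j φ everywhere
  have hpdh : ∀ x, pd j h x = pd j f x * φ x + f x * pd j φ x := by
    intro x
    rcases hcover x with hx | hx
    · show fderiv ℝ h x _ = _
      rw [hfderivh, hF]
      simp only [ContinuousLinearMap.add_apply, ContinuousLinearMap.smul_apply, smul_eq_mul]
      unfold pd; ring
    · have h1 : φ x = 0 := image_eq_zero_of_notMem_tsupport hx
      have h2 : pd j φ x = 0 := pd_zero_off_tsupport hx j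
      have h3 : pd j h x = 0 := by
        show fderiv ℝ h x _ = 0
        rw [(hev0 x hx).fderiv_eq, fderiv_fun_const]
        rfl
      rw [h1, h2, h3]; ring
  have hsetint : ∫ x in Ω, pd j h x = ∫ x, pd j h x := by
    apply setIntegral_eq_integral_of_forall_compl_eq_zero
    intro x hx
    have hxt : x ∉ tsupport φ := fun h => hx (hφsub h)
    show fderiv ℝ h x _ = 0
    rw [(hev0 x hxt).fderiv_eq, fderiv_fun_const]
    rfl
  have hint1 : IntegrableOn (fun x => pd j f x * φ x) Ω volume := by
    have hcont : ContinuousOn (fun x => pd j f x) Ω :=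
      (ContinuousLinearMap.apply ℝ ℝ (EuclideanSpace.single j 1)).continuous.comp_continuousOn hf'
    exact glue_integrable hΩo hcont hφsm.continuous hφcs hφsub
  have hint2 : IntegrableOn (fun x => f x * pd j φ x) Ω volume := by
    exact glue_integrable hΩo hfc
      ((ContinuousLinearMap.apply ℝ ℝ (EuclideanSpace.single j 1)).continuous.comp
        ((hφsm.fderiv_right (m := (⊤ : ℕ∞)) (by simp)).continuous))
      (htp.2.1) (htp.2.2)
  have hfun : (fun x => pd j h x) = fun x => pd j f x * φ x + f x * pd j φ x := funext hpdh
  have hsplit : ∫ x in Ω, pd j h x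
      = (∫ x in Ω, pd j f x * φ x) + ∫ x in Ω, f x * pd j φ x := by
    rw [hfun]
    exact integral_add hint1 hint2
  have : (∫ x in Ω, pd j f x * φ x) + (∫ x in Ω, f x * pd j φ x) = 0 := by
    rw [← hsplit, hsetint, h0]
  linarith

lemma pd_contDiffOn {Ω : Set E3} (hΩo : IsOpen Ω) {f : E3 → ℝ} {n m : ℕ}
    (hf : ContDiffOn ℝ n f Ω) (hmn : m + 1 ≤ n) (i : Fin 3) :
    ContDiffOn ℝ m (pd i f) Ω := by
  have := hf.fderiv_of_isOpen hΩo (m := m) (by exact_mod_cast hmn)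
  exact this.clm_apply contDiffOn_const

lemma pd_continuousOn {Ω : Set E3} (hΩo : IsOpen Ω) {f : E3 → ℝ} {n : ℕ}
    (hf : ContDiffOn ℝ n f Ω) (hn : 1 ≤ n) (i : Fin 3) :
    ContinuousOn (pd i f) Ω :=
  (pd_contDiffOn hΩo hf (by exact_mod_cast hn) i).continuousOn

lemma pd_mul {a b : E3 → ℝ} {x : E3} (ha : DifferentiableAt ℝ a x)
    (hb : DifferentiableAt ℝ b x) (j : Fin 3) :
    pd j (fun y => a y * b y) x = pd j a x * b x + a x * pd j b x := by
  unfold pd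
  rw [fderiv_fun_mul ha hb]
  simp only [ContinuousLinearMap.add_apply, ContinuousLinearMap.smul_apply, smul_eq_mul]
  ring

lemma pd_comp_real {F : ℝ → ℝ} {ρ : E3 → ℝ} {x : E3} {d : ℝ}
    (hF : HasDerivAt F d (ρ x)) (hρ : DifferentiableAt ℝ ρ x) (j : Fin 3) :
    pd j (fun y => F (ρ y)) x = d * pd j ρ x := by
  have h2 : HasFDerivAt (fun y => F (ρ y)) (d • fderiv ℝ ρ x) x :=
    hF.comp_hasFDerivAt x hρ.hasFDerivAt
  unfold pd
  rw [h2.fderiv]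
  simp [smul_eq_mul]

lemma pd_log {ρ : E3 → ℝ} {x : E3} (hρ : DifferentiableAt ℝ ρ x) (hx : 0 < ρ x) (j : Fin 3) :
    pd j (fun y => Real.log (ρ y)) x = pd j ρ x / ρ x := by
  rw [pd_comp_real (Real.hasDerivAt_log (ne_of_gt hx)) hρ j, div_eq_inv_mul]

/-- antiderivative of μ(t)/t on (0,∞) -/
noncomputable def lam (μ : ℝ → ℝ) : ℝ → ℝ := fun s => ∫ t in (1:ℝ)..s, μ t / t

lemma lam_hasDerivAt {μ : ℝ → ℝ} (hμ : ContDiffOn ℝ 1 μ (Set.Ioi 0)) {s : ℝ} (hs : 0 < s) :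
    HasDerivAt (lam μ) (μ s / s) s := by
  have hcont : ContinuousOn (fun t => μ t / t) (Set.Ioi 0) :=
    hμ.continuousOn.div continuousOn_id (fun t ht => ne_of_gt ht)
  have hsub : Set.uIcc 1 s ⊆ Set.Ioi 0 := by
    intro t ht
    rw [Set.mem_uIcc] at ht
    rcases ht with ⟨h1, _⟩ | ⟨h1, _⟩ <;> [exact lt_of_lt_of_le one_pos h1; exact lt_of_lt_of_le hs h1]
  have hii : IntervalIntegrable (fun t => μ t / t) volume 1 s :=
    (hcont.mono hsub).intervalIntegrable
  apply intervalIntegral.integral_hasDerivAt_right hii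
  · exact (hcont.stronglyMeasurableAtFilter isOpen_Ioi) s hs
  · exact hcont.continuousAt (isOpen_Ioi.mem_nhds hs)

lemma pd_const (c : ℝ) (j : Fin 3) (x : E3) : pd j (fun _ => c) x = 0 := by
  unfold pd; rw [fderiv_fun_const]; rfl

/-- global divergence-free -/
lemma divfree_global {Ω : Set E3} {w : Fin 3 → E3 → ℝ} (hw : TestVF Ω w) (x : E3) :
    ∑ i, pd i (w i) x = 0 := by
  by_cases hx : x ∈ Ω
  · exact hw.2 x hx
  · apply Finset.sum_eq_zero
    intro i _
    exact pd_zero_off_tsupport (fun h => hx ((hw.1 i).2.2 h)) i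

/-- the vanishing of the summed third derivatives -/
lemma third_deriv_sum_zero {Ω : Set E3} {w : Fin 3 → E3 → ℝ} (hw : TestVF Ω w) (x : E3) :
    ∑ i : Fin 3, ∑ j : Fin 3, pd i (pd j (pd j (w i))) x = 0 := by
  have hsm : ∀ i, ContDiff ℝ (⊤ : ℕ∞) (w i) := fun i => (hw.1 i).1
  have key : ∀ (i j : Fin 3) (y : E3),
      pd i (pd j (pd j (w i))) y = pd j (pd j (pd i (w i))) y := by
    intro i j y
    rw [pd_comm (pd_smooth (hsm i) j) i j y]
    congr 1
    funext z
    exact pd_comm (hsm i) i j z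
  have h2 : ∀ (j : Fin 3) (y : E3),
      ∑ i : Fin 3, pd j (pd j (pd i (w i))) y = 0 := by
    intro j y
    rw [← pd_sum (fun i => ((pd_smooth (pd_smooth (hsm i) i) j).differentiable (by simp)) y) j]
    have hinner : (fun z => ∑ i : Fin 3, pd j (pd i (w i)) z) = fun _ => (0:ℝ) := by
      funext z
      rw [← pd_sum (fun i => ((pd_smooth (hsm i) i).differentiable (by simp)) z) j]
      have : (fun z' => ∑ i : Fin 3, pd i (w i) z') = fun _ => (0:ℝ) :=
        funext (divfree_global hw)
      rw [this, pd_const]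
    calc pd j (fun z => ∑ i : Fin 3, pd j (pd i (w i)) z) y
        = pd j (fun _ => (0:ℝ)) y := by rw [hinner]
      _ = 0 := pd_const 0 j y
  calc ∑ i : Fin 3, ∑ j : Fin 3, pd i (pd j (pd j (w i))) x
      = ∑ i : Fin 3, ∑ j : Fin 3, pd j (pd j (pd i (w i))) x :=
        Finset.sum_congr rfl fun i _ => Finset.sum_congr rfl fun j _ => key i j x
    _ = ∑ j : Fin 3, ∑ i : Fin 3, pd j (pd j (pd i (w i))) x := Finset.sum_comm
    _ = 0 := by simp [h2]

lemma c1_pack {Ω : Set E3} (hΩo : IsOpen Ω) {f : E3 → ℝ} (hf : ContDiffOn ℝ 1 f Ω) :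
    (∀ x ∈ Ω, DifferentiableAt ℝ f x) ∧ ContinuousOn (fderiv ℝ f) Ω :=
  ⟨fun x hx => (hf.contDiffAt (hΩo.mem_nhds hx)).differentiableAt one_ne_zero,
   hf.continuousOn_fderiv_of_isOpen hΩo le_rfl⟩


/-- Identity (2.4): `∫_Ω {∇·(μ(ρ)∇∇(log ρ))}·w
= ∑_{i,j}∫_Ω (μ'(ρ)/ρ)(∂_iρ)(∂_jρ)(∂_jw_i)` for a divergence-free test field `w`. -/
theorem statement14 (Ω : Set E3) (hΩo : IsOpen Ω)
    (μ : ℝ → ℝ) (hμ : ContDiffOn ℝ 1 μ (Set.Ioi 0))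
    (ρ : E3 → ℝ) (hρ : ContDiffOn ℝ 3 ρ Ω) (hρpos : ∀ x ∈ Ω, 0 < ρ x)
    (w : Fin 3 → E3 → ℝ) (hw : TestVF Ω w) :
    (∫ x in Ω, ∑ i : Fin 3,
        (∑ j : Fin 3,
          pd j (fun y => μ (ρ y) * pd j (pd i (fun z => Real.log (ρ z))) y) x) * w i x)
      = ∑ i : Fin 3, ∑ j : Fin 3, ∫ x in Ω,
          (deriv μ (ρ x) / ρ x) * pd i ρ x * pd j ρ x * pd j (w i) x := by
  -- basic regularity facts
  have hρmaps : Set.MapsTo ρ Ω (Set.Ioi 0) := fun x hx => hρpos x hx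
  have hρmaps' : Set.MapsTo ρ Ω ({0}ᶜ : Set ℝ) := fun x hx => ne_of_gt (hρpos x hx)
  have hL : ContDiffOn ℝ 3 (fun z => Real.log (ρ z)) Ω :=
    (Real.contDiffOn_log (n := 3)).comp hρ hρmaps'
  have hpdiL : ∀ i, ContDiffOn ℝ 2 (pd i (fun z => Real.log (ρ z))) Ω :=
    fun i => pd_contDiffOn hΩo hL (by norm_num) i
  have hμρ : ContDiffOn ℝ 1 (fun y => μ (ρ y)) Ω :=
    hμ.comp (hρ.of_le (by norm_num)) hρmaps
  have hu : ∀ i j, ContDiffOn ℝ 1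
      (fun y => μ (ρ y) * pd j (pd i (fun z => Real.log (ρ z))) y) Ω :=
    fun i j => hμρ.mul (pd_contDiffOn hΩo (hpdiL i) (by norm_num) j)
  have hG : ∀ i, ContDiffOn ℝ 1
      (fun y => μ (ρ y) * pd i (fun z => Real.log (ρ z)) y) Ω :=
    fun i => hμρ.mul ((hpdiL i).of_le (by norm_num))
  have hρd : ∀ x ∈ Ω, DifferentiableAt ℝ ρ x :=
    fun x hx => ((hρ.of_le (by norm_num : (1:WithTop ℕ∞) ≤ 3)).contDiffAt
      (hΩo.mem_nhds hx)).differentiableAt one_ne_zero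
  have hμd : ∀ x ∈ Ω, DifferentiableAt ℝ μ (ρ x) :=
    fun x hx => (hμ.contDiffAt (isOpen_Ioi.mem_nhds (hρpos x hx))).differentiableAt one_ne_zero
  have hρfc : ContinuousOn (fderiv ℝ ρ) Ω :=
    hρ.continuousOn_fderiv_of_isOpen hΩo (by norm_num)
  have hpdρc : ∀ i, ContinuousOn (pd i ρ) Ω := fun i => pd_continuousOn hΩo hρ (by norm_num) i
  have hderivμc : ContinuousOn (fun x => deriv μ (ρ x)) Ω := by
    have h1 : ContinuousOn (deriv μ) (Set.Ioi 0) :=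
      hμ.continuousOn_deriv_of_isOpen isOpen_Ioi le_rfl
    exact h1.comp (hρ.continuousOn) hρmaps
  have hρc : ContinuousOn ρ Ω := hρ.continuousOn
  -- the antiderivative Λ
  set Λ : E3 → ℝ := fun y => lam μ (ρ y) with hΛdef
  have hΛderiv : ∀ x ∈ Ω, HasFDerivAt Λ ((μ (ρ x) / ρ x) • fderiv ℝ ρ x) x :=
    fun x hx => (lam_hasDerivAt hμ (hρpos x hx)).comp_hasFDerivAt x (hρd x hx).hasFDerivAt
  have hΛd : ∀ x ∈ Ω, DifferentiableAt ℝ Λ x := fun x hx => (hΛderiv x hx).differentiableAt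
  have hscalc : ContinuousOn (fun x => μ (ρ x) / ρ x) Ω :=
    (hμ.continuousOn.comp hρc hρmaps).div hρc (fun x hx => ne_of_gt (hρpos x hx))
  have hΛfc : ContinuousOn (fderiv ℝ Λ) Ω := by
    exact ContinuousOn.congr (hscalc.smul hρfc) (fun x hx => (hΛderiv x hx).fderiv)
  have hpdΛ : ∀ (i : Fin 3), ∀ x ∈ Ω, pd i Λ x = (μ (ρ x) / ρ x) * pd i ρ x := by
    intro i x hx
    show fderiv ℝ Λ x _ = _
    rw [(hΛderiv x hx).fderiv]
    simp only [ContinuousLinearMap.smul_apply, smul_eq_mul]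
    rfl
  have hpdΛc : ∀ i : Fin 3, ContinuousOn (pd i Λ) Ω := by
    intro i
    exact ContinuousOn.congr (hscalc.mul (hpdρc i)) (fun x hx => hpdΛ i x hx)
  have hΛc : ContinuousOn Λ Ω := fun x hx => (hΛd x hx).continuousAt.continuousWithinAt
  -- G i = pd i Λ on Ω
  have hGΛ : ∀ (i : Fin 3), ∀ x ∈ Ω,
      μ (ρ x) * pd i (fun z => Real.log (ρ z)) x = pd i Λ x := by
    intro i x hx
    rw [hpdΛ i x hx, pd_log (hρd x hx) (hρpos x hx) i]
    field_simp
  -- integrability helpers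
  have hwT : ∀ i : Fin 3, TestFun Ω (w i) := hw.1
  have hint1 : ∀ i j : Fin 3, IntegrableOn
      (fun x => pd j (fun y => μ (ρ y) * pd j (pd i (fun z => Real.log (ρ z))) y) x * w i x)
      Ω volume := fun i j =>
    glue_integrable hΩo (pd_continuousOn hΩo (hu i j) le_rfl j)
      ((hwT i).1.continuous) (hwT i).2.1 (hwT i).2.2
  have hintg : ∀ i j : Fin 3, IntegrableOn
      (fun x => deriv μ (ρ x) / ρ x * pd i ρ x * pd j ρ x * pd j (w i) x) Ω volume := by
    intro i j
    have hgc : ContinuousOn (fun x => deriv μ (ρ x) / ρ x * pd i ρ x * pd j ρ x) Ω :=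
      ((hderivμc.div hρc (fun x hx => ne_of_gt (hρpos x hx))).mul (hpdρc i)).mul (hpdρc j)
    exact glue_integrable hΩo hgc ((hwT i).pd j).1.continuous ((hwT i).pd j).2.1
      ((hwT i).pd j).2.2
  have hintG : ∀ i j : Fin 3, IntegrableOn
      (fun x => pd j (fun y => μ (ρ y) * pd i (fun z => Real.log (ρ z)) y) x * pd j (w i) x)
      Ω volume := fun i j =>
    glue_integrable hΩo (pd_continuousOn hΩo (hG i) le_rfl j)
      ((hwT i).pd j).1.continuous ((hwT i).pd j).2.1 ((hwT i).pd j).2.2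
  have hintΛ : ∀ i j : Fin 3, IntegrableOn
      (fun x => Λ x * pd i (pd j (pd j (w i))) x) Ω volume := fun i j =>
    glue_integrable hΩo hΛc ((((hwT i).pd j).pd j).pd i).1.continuous
      ((((hwT i).pd j).pd j).pd i).2.1 ((((hwT i).pd j).pd j).pd i).2.2
  -- Step 1 : expand the sums and swap with the integral
  have step1 : (∫ x in Ω, ∑ i : Fin 3,
        (∑ j : Fin 3,
          pd j (fun y => μ (ρ y) * pd j (pd i (fun z => Real.log (ρ z))) y) x) * w i x)
      = ∑ i : Fin 3, ∑ j : Fin 3, ∫ x in Ω,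
          pd j (fun y => μ (ρ y) * pd j (pd i (fun z => Real.log (ρ z))) y) x * w i x := by
    calc (∫ x in Ω, ∑ i : Fin 3,
        (∑ j : Fin 3,
          pd j (fun y => μ (ρ y) * pd j (pd i (fun z => Real.log (ρ z))) y) x) * w i x)
        = ∫ x in Ω, ∑ i : Fin 3, ∑ j : Fin 3,
            pd j (fun y => μ (ρ y) * pd j (pd i (fun z => Real.log (ρ z))) y) x * w i x := by
          refine setIntegral_congr_fun hΩo.measurableSet fun x _ => ?_
          exact Finset.sum_congr rfl fun i _ => Finset.sum_mul _ _ _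
      _ = ∑ i : Fin 3, ∫ x in Ω, ∑ j : Fin 3,
            pd j (fun y => μ (ρ y) * pd j (pd i (fun z => Real.log (ρ z))) y) x * w i x :=
          integral_finset_sum _ fun i _ => integrable_finset_sum _ fun j _ => hint1 i j
      _ = ∑ i : Fin 3, ∑ j : Fin 3, ∫ x in Ω,
            pd j (fun y => μ (ρ y) * pd j (pd i (fun z => Real.log (ρ z))) y) x * w i x :=
          Finset.sum_congr rfl fun i _ => integral_finset_sum _ fun j _ => hint1 i j
  -- Step 2 : integrate by parts once
  have step2 : ∀ i j : Fin 3,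
      (∫ x in Ω, pd j (fun y => μ (ρ y) * pd j (pd i (fun z => Real.log (ρ z))) y) x * w i x)
      = - ∫ x in Ω,
          (fun y => μ (ρ y) * pd j (pd i (fun z => Real.log (ρ z))) y) x * pd j (w i) x :=
    fun i j => ibp hΩo j (c1_pack hΩo (hu i j)).1 (c1_pack hΩo (hu i j)).2 (hwT i)
  -- Step 3 : pointwise rearrangement
  have hptw : ∀ i j : Fin 3, Set.EqOn
      (fun x => (fun y => μ (ρ y) * pd j (pd i (fun z => Real.log (ρ z))) y) x * pd j (w i) x)
      (fun x => pd j (fun y => μ (ρ y) * pd i (fun z => Real.log (ρ z)) y) x * pd j (w i) x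
        - deriv μ (ρ x) / ρ x * pd i ρ x * pd j ρ x * pd j (w i) x) Ω := by
    intro i j x hx
    have hμρd : DifferentiableAt ℝ (fun y => μ (ρ y)) x :=
      ((hμd x hx).hasDerivAt.comp_hasFDerivAt x (hρd x hx).hasFDerivAt).differentiableAt
    have hpdiLd : DifferentiableAt ℝ (pd i (fun z => Real.log (ρ z))) x :=
      (c1_pack hΩo ((hpdiL i).of_le (by norm_num))).1 x hx
    have h1 : pd j (fun y => μ (ρ y) * pd i (fun z => Real.log (ρ z)) y) x
        = deriv μ (ρ x) * pd j ρ x * (pd i ρ x / ρ x)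
          + μ (ρ x) * pd j (pd i (fun z => Real.log (ρ z))) x := by
      rw [pd_mul hμρd hpdiLd j, pd_comp_real (hμd x hx).hasDerivAt (hρd x hx) j,
        pd_log (hρd x hx) (hρpos x hx) i]
    simp only
    rw [h1]
    have hρne : ρ x ≠ 0 := ne_of_gt (hρpos x hx)
    field_simp
    ring
  have step3 : ∀ i j : Fin 3,
      (- ∫ x in Ω,
          (fun y => μ (ρ y) * pd j (pd i (fun z => Real.log (ρ z))) y) x * pd j (w i) x)
      = (∫ x in Ω, deriv μ (ρ x) / ρ x * pd i ρ x * pd j ρ x * pd j (w i) x)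
        - ∫ x in Ω, pd j (fun y => μ (ρ y) * pd i (fun z => Real.log (ρ z)) y) x
            * pd j (w i) x := by
    intro i j
    rw [setIntegral_congr_fun hΩo.measurableSet (hptw i j),
      integral_sub (hintG i j) (hintg i j)]
    ring
  -- the remaining term vanishes
  have hT : ∀ i j : Fin 3,
      (∫ x in Ω, pd j (fun y => μ (ρ y) * pd i (fun z => Real.log (ρ z)) y) x * pd j (w i) x)
      = ∫ x in Ω, Λ x * pd i (pd j (pd j (w i))) x := by
    intro i j
    rw [ibp hΩo j (c1_pack hΩo (hG i)).1 (c1_pack hΩo (hG i)).2 ((hwT i).pd j)]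
    have e1 : (∫ x in Ω,
        (fun y => μ (ρ y) * pd i (fun z => Real.log (ρ z)) y) x * pd j (pd j (w i)) x)
        = ∫ x in Ω, pd i Λ x * pd j (pd j (w i)) x := by
      refine setIntegral_congr_fun hΩo.measurableSet fun x hx => ?_
      simp only
      rw [hGΛ i x hx]
    rw [e1, ibp hΩo i hΛd hΛfc (((hwT i).pd j).pd j), neg_neg]
  have hTsum : (∑ i : Fin 3, ∑ j : Fin 3, ∫ x in Ω,
      pd j (fun y => μ (ρ y) * pd i (fun z => Real.log (ρ z)) y) x * pd j (w i) x) = 0 := by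
    have hptws : ∀ x : E3, (∑ i : Fin 3, ∑ j : Fin 3, Λ x * pd i (pd j (pd j (w i))) x) = 0 := by
      intro x
      have h0 := third_deriv_sum_zero hw x
      calc (∑ i : Fin 3, ∑ j : Fin 3, Λ x * pd i (pd j (pd j (w i))) x)
          = Λ x * ∑ i : Fin 3, ∑ j : Fin 3, pd i (pd j (pd j (w i))) x := by
            rw [Finset.mul_sum]
            exact Finset.sum_congr rfl fun i _ => (Finset.mul_sum _ _ _).symm
        _ = 0 := by rw [h0, mul_zero]
    calc (∑ i : Fin 3, ∑ j : Fin 3, ∫ x in Ω,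
        pd j (fun y => μ (ρ y) * pd i (fun z => Real.log (ρ z)) y) x * pd j (w i) x)
        = ∑ i : Fin 3, ∑ j : Fin 3, ∫ x in Ω, Λ x * pd i (pd j (pd j (w i))) x :=
          Finset.sum_congr rfl fun i _ => Finset.sum_congr rfl fun j _ => hT i j
      _ = ∑ i : Fin 3, ∫ x in Ω, ∑ j : Fin 3, Λ x * pd i (pd j (pd j (w i))) x :=
          Finset.sum_congr rfl fun i _ => (integral_finset_sum _ fun j _ => hintΛ i j).symm
      _ = ∫ x in Ω, ∑ i : Fin 3, ∑ j : Fin 3, Λ x * pd i (pd j (pd j (w i))) x :=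
          (integral_finset_sum _ fun i _ =>
            integrable_finset_sum _ fun j _ => hintΛ i j).symm
      _ = ∫ x in Ω, (0:ℝ) :=
          setIntegral_congr_fun hΩo.measurableSet fun x _ => hptws x
      _ = 0 := integral_zero _ _
  -- assemble
  calc (∫ x in Ω, ∑ i : Fin 3,
        (∑ j : Fin 3,
          pd j (fun y => μ (ρ y) * pd j (pd i (fun z => Real.log (ρ z))) y) x) * w i x)
      = ∑ i : Fin 3, ∑ j : Fin 3, ∫ x in Ω,
          pd j (fun y => μ (ρ y) * pd j (pd i (fun z => Real.log (ρ z))) y) x * w i x := step1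
    _ = ∑ i : Fin 3, ∑ j : Fin 3,
        ((∫ x in Ω, deriv μ (ρ x) / ρ x * pd i ρ x * pd j ρ x * pd j (w i) x)
          - ∫ x in Ω, pd j (fun y => μ (ρ y) * pd i (fun z => Real.log (ρ z)) y) x
            * pd j (w i) x) :=
        Finset.sum_congr rfl fun i _ => Finset.sum_congr rfl fun j _ =>
          (step2 i j).trans (step3 i j)
    _ = (∑ i : Fin 3, ∑ j : Fin 3,
          ∫ x in Ω, deriv μ (ρ x) / ρ x * pd i ρ x * pd j ρ x * pd j (w i) x)
        - ∑ i : Fin 3, ∑ j : Fin 3, ∫ x in Ω,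
            pd j (fun y => μ (ρ y) * pd i (fun z => Real.log (ρ z)) y) x * pd j (w i) x := by
        simp [Finset.sum_sub_distrib]
    _ = ∑ i : Fin 3, ∑ j : Fin 3, ∫ x in Ω,
          deriv μ (ρ x) / ρ x * pd i ρ x * pd j ρ x * pd j (w i) x := by
        rw [hTsum, sub_zero]
end
end

section
/- Let Ω ⊆ ℝ³ be a bounded open set, let α > 0, and let ρ ∈ L^∞(Ω) with ρ(x) ≥ α for a.e. x ∈ Ω. Let ω ∈ L²(Ω;ℝ³) be such that (i) there exists a sequence (ω_l)_{l∈ℕ} in C_{c,σ}^∞(Ω) with ‖ω − ω_l‖_{L²(Ω)³} → 0 as l → ∞, and (ii) ∫_Ω ρ ω · φ dx = 0 for every φ ∈ C_{c,σ}^∞(Ω). Then ω = 0 a.e. on Ω. -/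
open MeasureTheory Filter

noncomputable section

-- pointwise Young inequality
lemma young (ε a b : ℝ) (hε : 0 < ε) : |a * b| ≤ ε * a ^ 2 + (1 / (4 * ε)) * b ^ 2 := by
  have hc : 4 * ε * (1 / (4 * ε)) = 1 := by field_simp
  have h1 : |a * b| = |a| * |b| := abs_mul a b
  rw [h1]
  rw [← sq_abs a, ← sq_abs b]
  nlinarith [sq_nonneg (2 * ε * |a| - |b|), abs_nonneg a, abs_nonneg b, hε]

-- L2 * L2 integrable
lemma mulint {μ : Measure E3} {f g : E3 → ℝ} (hf : MemLp f 2 μ) (hg : MemLp g 2 μ) :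
    Integrable (fun x => f x * g x) μ := by
  have h : MemLp (g • f) 1 μ := hf.smul hg (hpqr := ⟨by simp [one_div, ENNReal.inv_two_add_inv_two]⟩)
  rw [memLp_one_iff_integrable] at h
  have heq : (g • f) = fun x => f x * g x := by funext x; simp [mul_comm]
  rwa [heq] at h

/-- If `ρ ∈ L^∞(Ω)` with `ρ ≥ α > 0` a.e., and `ω ∈ L²(Ω;ℝ³)` is approximable by
divergence-free test fields and satisfies `∫_Ω ρω·φ = 0` for every
`φ ∈ C_{c,σ}^∞(Ω)`, then `ω = 0` a.e. on `Ω`. -/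
theorem statement19 (Ω : Set E3) (hΩo : IsOpen Ω) (hΩb : Bornology.IsBounded Ω)
    (α : ℝ) (hα : 0 < α)
    (ρ : E3 → ℝ) (hρmem : MemLp ρ ⊤ (volume.restrict Ω))
    (hρbd : ∀ᵐ x ∂(volume.restrict Ω), α ≤ ρ x)
    (ω : Fin 3 → E3 → ℝ) (hω : ∀ i, MemLp (ω i) 2 (volume.restrict Ω))
    (happrox : ∃ ωl : ℕ → Fin 3 → E3 → ℝ, (∀ l, TestVF Ω (ωl l)) ∧
      Tendsto (fun l => Real.sqrt (∫ x in Ω, ∑ i : Fin 3, (ω i x - ωl l i x)^2))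
        atTop (nhds 0))
    (horth : ∀ φ : Fin 3 → E3 → ℝ, TestVF Ω φ →
      (∫ x in Ω, ∑ i : Fin 3, ρ x * ω i x * φ i x) = 0) :
    ∀ᵐ x ∂(volume.restrict Ω), ∀ i, ω i x = 0 := by
  obtain ⟨ωl, hωl, hconv⟩ := happrox
  -- membership facts
  have hωl2 : ∀ l i, MemLp (ωl l i) 2 (volume.restrict Ω) := fun l i =>
    ((((hωl l).1 i).1.continuous.memLp_of_hasCompactSupport ((hωl l).1 i).2.1).restrict Ω)
  have hg : ∀ i, MemLp (fun x => ρ x * ω i x) 2 (volume.restrict Ω) := by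
    intro i
    have h : MemLp (ω i • ρ) 2 (volume.restrict Ω) := hρmem.smul (hω i)
    have heq : (ω i • ρ) = fun x => ρ x * ω i x := by funext x; simp [mul_comm]
    rwa [heq] at h
  have hfl2 : ∀ l i, MemLp (fun x => ω i x - ωl l i x) 2 (volume.restrict Ω) :=
    fun l i => (hω i).sub (hωl2 l i)
  -- integrability facts
  have intK : Integrable (fun x => ∑ i : Fin 3, ρ x * ω i x * ω i x) (volume.restrict Ω) :=
    integrable_finset_sum _ fun i _ => mulint (hg i) (hω i)
  have intM : Integrable (fun x => ∑ i : Fin 3, (ρ x * ω i x)^2) (volume.restrict Ω) :=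
    integrable_finset_sum _ fun i _ => (hg i).integrable_sq
  have intS : ∀ l, Integrable (fun x => ∑ i : Fin 3, (ω i x - ωl l i x)^2) (volume.restrict Ω) :=
    fun l => integrable_finset_sum _ fun i _ => (hfl2 l i).integrable_sq
  have intT : ∀ l, Integrable (fun x => ∑ i : Fin 3, ρ x * ω i x * (ω i x - ωl l i x))
      (volume.restrict Ω) :=
    fun l => integrable_finset_sum _ fun i _ => mulint (hg i) (hfl2 l i)
  have intO : ∀ l, Integrable (fun x => ∑ i : Fin 3, ρ x * ω i x * ωl l i x)
      (volume.restrict Ω) :=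
    fun l => integrable_finset_sum _ fun i _ => mulint (hg i) (hωl2 l i)
  set K := ∫ x in Ω, ∑ i : Fin 3, ρ x * ω i x * ω i x with hKdef
  set M := ∫ x in Ω, ∑ i : Fin 3, (ρ x * ω i x)^2 with hMdef
  set S := fun l => ∫ x in Ω, ∑ i : Fin 3, (ω i x - ωl l i x)^2 with hSdef
  have hSnn : ∀ l, 0 ≤ S l := fun l =>
    integral_nonneg fun x => Finset.sum_nonneg fun i _ => sq_nonneg _
  have hMnn : 0 ≤ M :=
    integral_nonneg fun x => Finset.sum_nonneg fun i _ => sq_nonneg _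
  have hS0 : Tendsto S atTop (nhds 0) := by
    have h2 : Tendsto (fun l => Real.sqrt (S l) * Real.sqrt (S l)) atTop (nhds 0) := by
      simpa using hconv.mul hconv
    exact (Filter.tendsto_congr fun l => Real.mul_self_sqrt (hSnn l)).mp h2
  -- K equals the error term
  have hK_eq : ∀ l, K = ∫ x in Ω, ∑ i : Fin 3, ρ x * ω i x * (ω i x - ωl l i x) := by
    intro l
    have hsplit : (fun x => ∑ i : Fin 3, ρ x * ω i x * ω i x)
        = fun x => (∑ i : Fin 3, ρ x * ω i x * ωl l i x)
            + ∑ i : Fin 3, ρ x * ω i x * (ω i x - ωl l i x) := by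
      funext x
      rw [← Finset.sum_add_distrib]
      exact Finset.sum_congr rfl fun i _ => by ring
    rw [hKdef, hsplit, integral_add (intO l) (intT l), horth (ωl l) (hωl l), zero_add]
  -- the key bound
  have hbound : ∀ ε : ℝ, 0 < ε → ∀ l, |K| ≤ ε * M + (1/(4*ε)) * S l := by
    intro ε hε l
    rw [hK_eq l]
    calc |∫ x in Ω, ∑ i : Fin 3, ρ x * ω i x * (ω i x - ωl l i x)|
        ≤ ∫ x in Ω, |∑ i : Fin 3, ρ x * ω i x * (ω i x - ωl l i x)| :=
          by simpa [Real.norm_eq_abs] using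
            norm_integral_le_integral_norm (μ := volume.restrict Ω)
              (fun x => ∑ i : Fin 3, ρ x * ω i x * (ω i x - ωl l i x))
      _ ≤ ∫ x in Ω, (ε * ∑ i : Fin 3, (ρ x * ω i x)^2
            + (1/(4*ε)) * ∑ i : Fin 3, (ω i x - ωl l i x)^2) := by
          apply integral_mono (intT l).abs ((intM.const_mul ε).add ((intS l).const_mul _))
          intro x
          calc |∑ i : Fin 3, ρ x * ω i x * (ω i x - ωl l i x)|
              ≤ ∑ i : Fin 3, |ρ x * ω i x * (ω i x - ωl l i x)| :=
                Finset.abs_sum_le_sum_abs _ _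
            _ ≤ ∑ i : Fin 3, (ε * (ρ x * ω i x)^2 + (1/(4*ε)) * (ω i x - ωl l i x)^2) :=
                Finset.sum_le_sum fun i _ => young ε _ _ hε
            _ = ε * (∑ i : Fin 3, (ρ x * ω i x)^2)
                  + (1/(4*ε)) * ∑ i : Fin 3, (ω i x - ωl l i x)^2 := by
                rw [Finset.sum_add_distrib, ← Finset.mul_sum, ← Finset.mul_sum]
      _ = ε * M + (1/(4*ε)) * S l := by
          rw [integral_add (intM.const_mul ε) ((intS l).const_mul _),
            integral_const_mul, integral_const_mul]
  -- deduce K = 0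
  have hK0 : K = 0 := by
    have habs : |K| ≤ 0 := by
      refine le_of_forall_pos_le_add fun δ hδ => ?_
      have hM1 : 0 < M + 1 := by linarith
      set ε := δ / (2 * (M + 1)) with hεdef
      have hε : 0 < ε := by positivity
      have hev : ∀ᶠ l in atTop, S l < 4 * ε * (δ / 2) :=
        hS0.eventually (gt_mem_nhds (by positivity))
      obtain ⟨l, hl⟩ := hev.exists
      have h1 : ε * M ≤ δ / 2 := by
        rw [hεdef]
        rw [div_mul_eq_mul_div, div_le_div_iff₀ (by positivity) (by norm_num)]
        nlinarith
      have h2 : (1/(4*ε)) * S l ≤ δ / 2 := by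
        rw [div_mul_eq_mul_div, one_mul, div_le_iff₀ (by positivity)]
        calc S l ≤ 4 * ε * (δ/2) := le_of_lt hl
          _ = δ / 2 * (4 * ε) := by ring
      calc |K| ≤ ε * M + (1/(4*ε)) * S l := hbound ε hε l
        _ ≤ δ / 2 + δ / 2 := add_le_add h1 h2
        _ = 0 + δ := by ring
    have := le_antisymm habs (abs_nonneg K)
    exact abs_eq_zero.mp this
  -- conclude
  have hω2int : Integrable (fun x => ∑ i : Fin 3, (ω i x)^2) (volume.restrict Ω) :=
    integrable_finset_sum _ fun i _ => (hω i).integrable_sq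
  have hle : α * ∫ x in Ω, ∑ i : Fin 3, (ω i x)^2 ≤ K := by
    rw [← integral_const_mul]
    apply integral_mono_ae (hω2int.const_mul α) intK
    filter_upwards [hρbd] with x hx
    have h1 : ∑ i : Fin 3, ρ x * ω i x * ω i x = ρ x * ∑ i : Fin 3, (ω i x)^2 := by
      rw [Finset.mul_sum]
      exact Finset.sum_congr rfl fun i _ => by ring
    rw [h1]
    exact mul_le_mul_of_nonneg_right hx (Finset.sum_nonneg fun i _ => sq_nonneg _)
  have hInn : 0 ≤ ∫ x in Ω, ∑ i : Fin 3, (ω i x)^2 :=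
    integral_nonneg fun x => Finset.sum_nonneg fun i _ => sq_nonneg _
  have hint0 : (∫ x in Ω, ∑ i : Fin 3, (ω i x)^2) = 0 := by
    have : α * ∫ x in Ω, ∑ i : Fin 3, (ω i x)^2 ≤ 0 := hK0 ▸ hle
    nlinarith
  have hzero : (fun x => ∑ i : Fin 3, (ω i x)^2) =ᵐ[volume.restrict Ω] 0 :=
    (integral_eq_zero_iff_of_nonneg_ae
      (Eventually.of_forall fun x => Finset.sum_nonneg fun i _ => sq_nonneg _) hω2int).mp hint0
  filter_upwards [hzero] with x hx i
  have hx0 : ∑ i : Fin 3, (ω i x)^2 = 0 := hx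
  have := (Finset.sum_eq_zero_iff_of_nonneg fun i _ => sq_nonneg (ω i x)).mp hx0 i
    (Finset.mem_univ i)
  exact pow_eq_zero_iff (by norm_num) |>.mp this
end
end
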